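/- (Noiseless combiner identity, Lemma 2 of the paper.) Let N be a positive integer, s ∈ ℂ^N, p ∈ ℝ^N with p_j ≥ 0 for all j, g ∈ ℂ with g ≠ 0, and let a, d ∈ ℂ^N be unit-modulus vectors. For each m ∈ {0,…,N−1} define the precoded vector x_m ∈ ℂ^N by x_m(i) = (1/√N) Σ_{j=0}^{N−1} U_j(i,m) √(p_j) s_j, and the received sample y_m = d_m · g · (Σ_{i=0}^{N−1} a_i x_m(i)). Then for every n ∈ {0,…,N−1}, the combined signal c_n = (1/g) Σ_{m=0}^{N−1} (Σ_{i=0}^{N−1} conj(a_i) conj(U_n(i,m))) · conj(d_m) · y_m satisfies c_n = √(N p_n) · s_n. -/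

import Mathlib

/-! Write `ω = exp(2πi/N)` and `D_n = diag(ω^(i n))`. Shifting the columns of the DFT matrix
by `n` multiplies its rows by `ω^(i n)`, so `U_n = D_n U`, and unitarity of `U` gives
`U_j U_nᴴ = D_j D_nᴴ`. Hence for unit-modulus `a` the effective signatures `aᵀ U_j` satisfy
`⟨aᵀ U_n, aᵀ U_j⟩ = ∑ᵢ ω^(i (j - n)) = N δ_{jn}`. The combiner removes `d` and `g` (as
`|d_m| = 1`) and takes the inner product of the received signal `(1/√N) ∑_j √p_j s_j aᵀ U_j`
with `aᵀ U_n`. -/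

open Matrix Complex Finset

/-- The normalized `N × N` DFT matrix: `U i j = ω^(i*j) / √N` with `ω = exp(2πi/N)`. -/
noncomputable def dftU (N : ℕ) : Matrix (Fin N) (Fin N) ℂ :=
  fun i j => Complex.exp (2 * Real.pi * Complex.I / (N : ℂ)) ^ (i.val * j.val) / (Real.sqrt N : ℂ)

/-- The `n`-th circulant-permutation DFT (CP-DFT) matrix:
`U_n i j = U i ((j + n) mod N)`, where addition in `Fin N` is modulo `N`. -/
noncomputable def cpdft (N : ℕ) (n : Fin N) : Matrix (Fin N) (Fin N) ℂ :=
  fun i j => dftU N i (j + n)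

open ComplexConjugate

noncomputable def dftRoot (N : ℕ) : ℂ := Complex.exp (2 * Real.pi * Complex.I / N)

theorem IsPrimitiveRoot.sum_pow_mul_inv_pow {K : Type*} [Field K] {ζ : K} {N : ℕ}
    (hζ : IsPrimitiveRoot ζ N) (k l : Fin N) :
    ∑ i : Fin N, ζ ^ (i * k : ℕ) * (ζ ^ (i * l : ℕ))⁻¹ = if k = l then (N : K) else 0 := by
  have hζ0 : ζ ≠ 0 := hζ.ne_zero k.pos.ne'
  set z := ζ ^ (k : ℕ) / ζ ^ (l : ℕ)
  have hterm (i : Fin N) : ζ ^ (i * k : ℕ) * (ζ ^ (i * l : ℕ))⁻¹ = z ^ (i : ℕ) := by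
    rw [div_pow, ← pow_mul, ← pow_mul, mul_comm (k : ℕ), mul_comm (l : ℕ), div_eq_mul_inv]
  rw [sum_congr rfl fun i _ => hterm i, Fin.sum_univ_eq_sum_range (z ^ ·)]
  have hz : z = 1 ↔ k = l := by
    rw [div_eq_one_iff_eq (pow_ne_zero _ hζ0), Fin.ext_iff]
    exact ⟨hζ.pow_inj k.2 l.2, congrArg _⟩
  split_ifs with hkl
  · simp [hz.2 hkl]
  · have hzN : z ^ N = 1 := by
      rw [div_pow, ← pow_mul, ← pow_mul, mul_comm, pow_mul, mul_comm (l : ℕ), pow_mul,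
        hζ.pow_eq_one, one_pow, one_pow, div_one]
    rw [geom_sum_eq (mt hz.1 hkl), hzN, sub_self, zero_div]

theorem dftU_apply (N : ℕ) (i j : Fin N) :
    dftU N i j = dftRoot N ^ (i * j : ℕ) / (Real.sqrt N : ℂ) := rfl

theorem isPrimitiveRoot_dftRoot (N : ℕ) [NeZero N] : IsPrimitiveRoot (dftRoot N) N :=
  Complex.isPrimitiveRoot_exp N (NeZero.ne N)

theorem sum_dftRoot_pow_mul_conj (N : ℕ) (k l : Fin N) :
    ∑ i : Fin N, dftRoot N ^ (i * k : ℕ) * conj (dftRoot N ^ (i * l : ℕ)) =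
      if k = l then (N : ℂ) else 0 := by
  have : NeZero N := ⟨k.pos.ne'⟩
  have hω := isPrimitiveRoot_dftRoot N
  have hnorm (m : ℕ) : ‖dftRoot N ^ m‖ = 1 := by
    rw [norm_pow, hω.norm'_eq_one (NeZero.ne N), one_pow]
  simp_rw [← inv_eq_conj (hnorm _)]
  exact hω.sum_pow_mul_inv_pow k l

theorem dftU_mul_conjTranspose (N : ℕ) : dftU N * (dftU N)ᴴ = 1 := by
  ext k l
  have hN : (N : ℂ) ≠ 0 := Nat.cast_ne_zero.2 k.pos.ne'
  have hsqrt : (Real.sqrt N : ℂ) * Real.sqrt N = N := by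
    rw [← ofReal_mul, Real.mul_self_sqrt (Nat.cast_nonneg N), ofReal_natCast]
  calc (dftU N * (dftU N)ᴴ) k l
      = (∑ i : Fin N, dftRoot N ^ (i * k : ℕ) * conj (dftRoot N ^ (i * l : ℕ))) / N := by
        simp only [mul_apply, conjTranspose_apply, dftU_apply, star_div₀, Complex.star_def,
          conj_ofReal, sum_div]
        refine sum_congr rfl fun i _ => ?_
        rw [div_mul_div_comm, hsqrt, mul_comm (k : ℕ), mul_comm (l : ℕ)]
    _ = (1 : Matrix (Fin N) (Fin N) ℂ) k l := by
        rw [sum_dftRoot_pow_mul_conj, one_apply]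
        split_ifs <;> simp [hN]

theorem cpdft_eq_diagonal_mul (N : ℕ) (n : Fin N) :
    cpdft N n = diagonal (fun i : Fin N => dftRoot N ^ (i * n : ℕ)) * dftU N := by
  ext i m
  have : NeZero N := ⟨i.pos.ne'⟩
  have hperiod : (dftRoot N ^ (i : ℕ)) ^ N = 1 := by
    rw [← pow_mul, mul_comm, pow_mul, (isPrimitiveRoot_dftRoot N).pow_eq_one, one_pow]
  rw [cpdft, dftU_apply, diagonal_mul, dftU_apply, mul_div_assoc', ← pow_add, ← mul_add,
    Fin.val_add, pow_mul, pow_mul, pow_eq_pow_of_modEq (Nat.mod_modEq _ _) hperiod, add_comm]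

theorem cpdft_mul_conjTranspose (N : ℕ) (j n : Fin N) :
    cpdft N j * (cpdft N n)ᴴ =
      diagonal (fun i : Fin N => dftRoot N ^ (i * j : ℕ) * conj (dftRoot N ^ (i * n : ℕ))) := by
  rw [cpdft_eq_diagonal_mul, cpdft_eq_diagonal_mul, conjTranspose_mul, diagonal_conjTranspose,
    Matrix.mul_assoc, ← Matrix.mul_assoc (dftU N), dftU_mul_conjTranspose, Matrix.one_mul,
    diagonal_mul_diagonal]
  rfl

theorem conj_mul_self_of_norm_eq_one {z : ℂ} (hz : ‖z‖ = 1) : conj z * z = 1 := by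
  rw [conj_mul', hz, ofReal_one, one_pow]

theorem star_vecMul_cpdft_dotProduct (N : ℕ) (a : Fin N → ℂ) (ha : ∀ i, ‖a i‖ = 1)
    (n j : Fin N) :
    star (a ᵥ* cpdft N n) ⬝ᵥ (a ᵥ* cpdft N j) = if j = n then (N : ℂ) else 0 := by
  rw [star_vecMul, dotProduct_comm, dotProduct_mulVec, vecMul_vecMul,
    cpdft_mul_conjTranspose, ← sum_dftRoot_pow_mul_conj]
  refine sum_congr rfl fun i _ => ?_
  rw [vecMul_diagonal, Pi.star_apply, Complex.star_def, mul_right_comm, mul_comm (a i),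
    conj_mul_self_of_norm_eq_one (ha i), one_mul]

theorem noiseless_combiner_identity_general (N : ℕ)
    (s : Fin N → ℂ) (p : Fin N → ℝ)
    (g : ℂ) (hg : g ≠ 0)
    (a d : Fin N → ℂ) (ha : ∀ i, ‖a i‖ = 1) (hd : ∀ m, ‖d m‖ = 1)
    (x : Fin N → Fin N → ℂ)
    (hx : ∀ m i, x m i =
      (1 / (Real.sqrt N : ℂ)) * ∑ j, cpdft N j i m * (Real.sqrt (p j) : ℂ) * s j)
    (y : Fin N → ℂ)
    (hy : ∀ m, y m = d m * g * ∑ i, a i * x m i)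
    (c : Fin N → ℂ)
    (hc : ∀ n, c n = (1 / g) * ∑ m,
      (∑ i, (starRingEnd ℂ) (a i) * (starRingEnd ℂ) (cpdft N n i m)) *
        (starRingEnd ℂ) (d m) * y m) :
    ∀ n, c n = (Real.sqrt ((N : ℝ) * p n) : ℂ) * s n := by
  intro n
  set r : Fin N → ℂ := fun m => ∑ i, a i * x m i
  have hr : r = (1 / (Real.sqrt N : ℂ)) •
      ∑ j, ((Real.sqrt (p j) : ℂ) * s j) • (a ᵥ* cpdft N j) := by
    ext m
    simp only [r, hx, Pi.smul_apply, Finset.sum_apply, vecMul, dotProduct, smul_eq_mul, mul_sum]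
    rw [sum_comm]
    exact sum_congr rfl fun j _ => sum_congr rfl fun i _ => by ring
  have hcancel (m : Fin N) (A S : ℂ) : 1 / g * (A * conj (d m) * (d m * g * S)) = A * S := by
    field_simp
    linear_combination A * S * conj_mul_self_of_norm_eq_one (hd m)
  have hcn : c n = star (a ᵥ* cpdft N n) ⬝ᵥ r := by
    rw [hc n, mul_sum]
    refine sum_congr rfl fun m _ => ?_
    simp only [hy, hcancel, Pi.star_apply, vecMul, dotProduct, star_sum, star_mul',
      Complex.star_def, r]
  have hNpos : (0 : ℝ) < N := Nat.cast_pos.2 n.pos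
  have hsqrt : (Real.sqrt N : ℂ) ≠ 0 := ofReal_ne_zero.2 (Real.sqrt_pos.2 hNpos).ne'
  rw [hcn, hr, dotProduct_smul, dotProduct_sum]
  simp only [dotProduct_smul, star_vecMul_cpdft_dotProduct N a ha, smul_eq_mul, mul_ite, mul_zero,
    sum_ite_eq', mem_univ, if_true, Real.sqrt_mul hNpos.le, ofReal_mul]
  field_simp
  rw [← ofReal_pow, Real.sq_sqrt hNpos.le, ofReal_natCast]
  ring

/-- noiseless combiner identity, Lemma 2:
with precoded vectors `x m i = (1/√N) ∑ j, U_j(i,m) √(p j) s j`, received samples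
`y m = d m · g · ∑ i, a i · x m i`, and combined signals
`c n = (1/g) ∑ m (∑ i, conj (a i) conj (U_n(i,m))) conj (d m) y m`,
one has `c n = √(N p_n) · s n` for every `n`. -/
theorem noiseless_combiner_identity (N : ℕ) (hN : 0 < N)
    (s : Fin N → ℂ) (p : Fin N → ℝ) (hp : ∀ j, 0 ≤ p j)
    (g : ℂ) (hg : g ≠ 0)
    (a d : Fin N → ℂ) (ha : ∀ i, ‖a i‖ = 1) (hd : ∀ m, ‖d m‖ = 1)
    (x : Fin N → Fin N → ℂ)
    (hx : ∀ m i, x m i =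
      (1 / (Real.sqrt N : ℂ)) * ∑ j, cpdft N j i m * (Real.sqrt (p j) : ℂ) * s j)
    (y : Fin N → ℂ)
    (hy : ∀ m, y m = d m * g * ∑ i, a i * x m i)
    (c : Fin N → ℂ)
    (hc : ∀ n, c n = (1 / g) * ∑ m,
      (∑ i, (starRingEnd ℂ) (a i) * (starRingEnd ℂ) (cpdft N n i m)) *
        (starRingEnd ℂ) (d m) * y m) :
    ∀ n, c n = (Real.sqrt ((N : ℝ) * p n) : ℂ) * s n :=
  noiseless_combiner_identity_general N s p g hg a d ha hd x hx y hy c hc
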